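/- arXiv:1604.04343 — 5 statements merged into one kernel-verified Lean document; each statement's English description precedes it below -/
import Mathlib

section
/- Let P be the stochastic matrix of an irreducible and aperiodic finite Markov chain and r a row vector. Then the matrix I − P + e·r is invertible if and only if r·e ≠ 0. -/
open Matrix

def IsStochastic {S : ℕ} (P : Matrix (Fin S) (Fin S) ℝ) : Prop :=
  (∀ i j, 0 ≤ P i j) ∧ ∀ i, ∑ j, P i j = 1

def IsPrimitive {S : ℕ} (P : Matrix (Fin S) (Fin S) ℝ) : Prop :=
  ∃ k : ℕ, ∀ i j, 0 < (P ^ k) i j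

/-! Any `x` in the kernel of `I - P + e·r` satisfies `P x = x + c e` with `c = r·x`. Comparing
both sides at a maximum and at a minimum of `x` gives `c = 0`, so `x` is `P`-harmonic; applying the
maximum principle to the strictly positive matrix `P ^ k` shows that `x` is constant, `x = a e`,
and then `0 = r·x = a (r·e)` forces `a = 0` when `r·e ≠ 0`. Conversely, `e` lies in the kernel
when `r·e = 0`. -/

namespace IsStochastic

variable {S : ℕ} {P : Matrix (Fin S) (Fin S) ℝ}

theorem one : IsStochastic (1 : Matrix (Fin S) (Fin S) ℝ) :=
  ⟨fun i j => by rw [one_apply]; split_ifs <;> norm_num, fun i => by simp [one_apply]⟩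

theorem mul {Q : Matrix (Fin S) (Fin S) ℝ} (hP : IsStochastic P) (hQ : IsStochastic Q) :
    IsStochastic (P * Q) := by
  refine ⟨fun i j => Finset.sum_nonneg (s := Finset.univ) fun l _ =>
    mul_nonneg (hP.1 i l) (hQ.1 l j), fun i => ?_⟩
  simp only [mul_apply]
  rw [Finset.sum_comm]
  simp [← Finset.mul_sum, hQ.2, hP.2 i]

theorem pow (hP : IsStochastic P) (n : ℕ) : IsStochastic (P ^ n) := by
  induction n with
  | zero => exact one
  | succ n ih => rw [pow_succ]; exact ih.mul hP

theorem mulVec_one (hP : IsStochastic P) : P *ᵥ 1 = 1 := by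
  ext i
  simp [mulVec, dotProduct, hP.2 i]

theorem mulVec_apply_le (hP : IsStochastic P) {x : Fin S → ℝ} {m : ℝ} (hx : ∀ j, x j ≤ m)
    (i : Fin S) : (P *ᵥ x) i ≤ m :=
  calc (P *ᵥ x) i = ∑ j, P i j * x j := rfl
    _ ≤ ∑ j, P i j * m :=
      Finset.sum_le_sum fun j _ => mul_le_mul_of_nonneg_left (hx j) (hP.1 i j)
    _ = m := by rw [← Finset.sum_mul, hP.2 i, one_mul]

theorem eq_zero_of_mulVec_eq_add_smul_one [Nonempty (Fin S)] (hP : IsStochastic P)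
    {x : Fin S → ℝ} {c : ℝ} (hx : P *ᵥ x = x + c • 1) : c = 0 := by
  have nonpos : ∀ (y : Fin S → ℝ) (d : ℝ), P *ᵥ y = y + d • 1 → d ≤ 0 := by
    intro y d hy
    obtain ⟨i, hi⟩ := Finite.exists_max y
    simpa [hy] using hP.mulVec_apply_le hi i
  refine le_antisymm (nonpos x c hx) (neg_nonpos.mp (nonpos (-x) (-c) ?_))
  rw [mulVec_neg, hx, neg_add, neg_smul]

theorem apply_eq_of_mulVec_apply_eq_max (hP : IsStochastic P) {x : Fin S → ℝ} {i : Fin S}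
    (hmax : ∀ j, x j ≤ x i) (hfix : (P *ᵥ x) i = x i) {j : Fin S} (hij : 0 < P i j) :
    x j = x i := by
  have hsum : ∑ l, P i l * (x i - x l) = 0 := by
    simp only [mul_sub, Finset.sum_sub_distrib, ← Finset.sum_mul, hP.2 i, one_mul]
    exact sub_eq_zero.mpr hfix.symm
  have hterm := (Finset.sum_eq_zero_iff_of_nonneg fun l _ =>
    mul_nonneg (hP.1 i l) (sub_nonneg.mpr (hmax l))).mp hsum j (Finset.mem_univ j)
  linarith [(mul_eq_zero.mp hterm).resolve_left hij.ne']

end IsStochastic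

theorem IsPrimitive.exists_eq_smul_one_of_mulVec_eq_self {S : ℕ} [Nonempty (Fin S)]
    {P : Matrix (Fin S) (Fin S) ℝ} (hP : IsStochastic P) (hprim : _root_.IsPrimitive P)
    {x : Fin S → ℝ} (hx : P *ᵥ x = x) : ∃ a : ℝ, x = a • 1 := by
  obtain ⟨k, hk⟩ := hprim
  have hpow : ∀ n : ℕ, (P ^ n) *ᵥ x = x := fun n => by
    induction n with
    | zero => simp
    | succ n ih => rw [pow_succ, ← mulVec_mulVec, hx, ih]
  obtain ⟨i, hi⟩ := Finite.exists_max x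
  refine ⟨x i, funext fun j => ?_⟩
  simpa using (hP.pow k).apply_eq_of_mulVec_apply_eq_max hi (congrFun (hpow k) i) (hk i j)

theorem IsPrimitive.eq_zero_of_mulVec_eq_zero {S : ℕ} [Nonempty (Fin S)]
    {P : Matrix (Fin S) (Fin S) ℝ} (hP : IsStochastic P) (hprim : _root_.IsPrimitive P)
    {r x : Fin S → ℝ} (hr : r ⬝ᵥ 1 ≠ 0) (hx : (1 - P + vecMulVec 1 r) *ᵥ x = 0) :
    x = 0 := by
  have hPx : P *ᵥ x = x + (r ⬝ᵥ x) • 1 := by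
    rw [add_mulVec, sub_mulVec, one_mulVec, vecMulVec_mulVec, op_smul_eq_smul] at hx
    rw [← sub_eq_zero, ← neg_eq_zero, ← hx]
    abel
  have hrx : r ⬝ᵥ x = 0 := hP.eq_zero_of_mulVec_eq_add_smul_one hPx
  obtain ⟨a, rfl⟩ := hprim.exists_eq_smul_one_of_mulVec_eq_self hP (by simpa [hrx] using hPx)
  rw [dotProduct_smul, smul_eq_mul, mul_eq_zero] at hrx
  simp [hrx.resolve_right hr]

/-- For a primitive stochastic matrix `P` and a row vector `r`, the matrix
`I − P + e·r` is invertible if and only if `r·e ≠ 0`. -/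
theorem generalized_fundamental_invertible_iff
    {S : ℕ} (hS : 0 < S) (P : Matrix (Fin S) (Fin S) ℝ)
    (hst : IsStochastic P) (hprim : _root_.IsPrimitive P)
    (r : Fin S → ℝ) (e : Fin S → ℝ) (he : e = fun _ => 1) :
    IsUnit (1 - P + vecMulVec e r) ↔ r ⬝ᵥ e ≠ 0 := by
  obtain rfl : e = 1 := he
  have : Nonempty (Fin S) := ⟨⟨0, hS⟩⟩
  rw [isUnit_iff_isUnit_det, isUnit_iff_ne_zero, Ne, ← exists_mulVec_eq_zero_iff, not_iff_not]
  constructor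
  · rintro ⟨x, hx0, hx⟩
    by_contra hr
    exact hx0 (hprim.eq_zero_of_mulVec_eq_zero hst hr hx)
  · intro hr
    refine ⟨1, one_ne_zero, ?_⟩
    rw [add_mulVec, sub_mulVec, one_mulVec, hst.mulVec_one, vecMulVec_mulVec, hr]
    simp
end

section
/- Let P be an irreducible aperiodic finite stochastic matrix with stationary distribution π, and let r be a row vector with r·e ≠ 0. Then π = r (I − P + e·r)^{-1}. -/
/-!
Put `A = 1 - P + e r`. Stationarity of `π` gives `π A = π - π P + (π e) r = r`, so once `A` is
invertible, `π = r A⁻¹`. If `A v = 0`, then `r v = π A v = 0`, hence `P v = v` and `P ^ k v = v`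
for the power `P ^ k` with positive entries. A vector fixed by a positive row-stochastic matrix is
constant (it is an average of its own values, so it is constant at a maximum), say `v = c e`; then
`0 = r v = c (r e)` forces `c = 0`.
-/

open Matrix

namespace Matrix

variable {ι : Type*} [Fintype ι]

theorem pow_mulVec_eq_self {R : Type*} [Semiring R] [DecidableEq ι] {P : Matrix ι ι R}
    {v : ι → R} (hv : P *ᵥ v = v) (k : ℕ) : (P ^ k) *ᵥ v = v := by
  induction k with
  | zero => exact one_mulVec v
  | succ k ih => rw [pow_succ, ← mulVec_mulVec, hv, ih]

theorem vecMul_one_sub_add_vecMulVec {R : Type*} [Ring R] [DecidableEq ι]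
    {P : Matrix ι ι R} {π e : ι → R} (hπP : π ᵥ* P = π) (hπe : π ⬝ᵥ e = 1) (r : ι → R) :
    π ᵥ* (1 - P + vecMulVec e r) = r := by
  rw [vecMul_add, vecMul_sub, vecMul_one, hπP, vecMul_vecMulVec, hπe, sub_self, one_smul,
    zero_add]

theorem apply_eq_of_pos_of_mulVec_eq_self {Q : Matrix ι ι ℝ} (hQ : ∀ i j, 0 < Q i j)
    (hQ1 : Q *ᵥ 1 = 1) {v : ι → ℝ} (hv : Q *ᵥ v = v) (i j : ι) : v i = v j := by
  have : Nonempty ι := ⟨i⟩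
  obtain ⟨m, hm⟩ := Finite.exists_max v
  suffices h : ∀ j, v j = v m by rw [h i, h j]
  have hfix : Q *ᵥ (v m • 1 - v) = v m • 1 - v := by
    rw [mulVec_sub, mulVec_smul, hQ1, hv]
  have hsum : ∑ j, Q m j * (v m - v j) = 0 := by
    simpa [mulVec, dotProduct] using congrFun hfix m
  intro j
  have hterm := (Finset.sum_eq_zero_iff_of_nonneg fun j _ =>
    mul_nonneg (hQ m j).le (sub_nonneg.2 (hm j))).1 hsum j (Finset.mem_univ j)
  rcases mul_eq_zero.1 hterm with hQmj | hvj
  · exact absurd hQmj (hQ m j).ne'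
  · linarith

theorem isUnit_one_sub_add_vecMulVec [DecidableEq ι] {P : Matrix ι ι ℝ} {k : ℕ}
    (hk : ∀ i j, 0 < (P ^ k) i j) (hP1 : P *ᵥ 1 = 1) {π r : ι → ℝ}
    (hπ : π ᵥ* (1 - P + vecMulVec 1 r) = r) (hr : r ⬝ᵥ 1 ≠ 0) :
    IsUnit (1 - P + vecMulVec 1 r) := by
  rw [← mulVec_injective_iff_isUnit]
  intro x y hxy
  set v := x - y
  have hv : (1 - P + vecMulVec 1 r) *ᵥ v = 0 := by
    rw [mulVec_sub, hxy, sub_self]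
  have hrv : r ⬝ᵥ v = 0 := by
    rw [← hπ, ← dotProduct_mulVec, hv, dotProduct_zero]
  have hPv : P *ᵥ v = v := by
    rw [add_mulVec, sub_mulVec, one_mulVec, vecMulVec_mulVec, hrv] at hv
    simpa [sub_eq_zero, eq_comm] using hv
  have hconst := apply_eq_of_pos_of_mulVec_eq_self hk
    (pow_mulVec_eq_self hP1 k) (pow_mulVec_eq_self hPv k)
  have hv0 : v = 0 := by
    funext i
    have hvi : v = v i • 1 := funext fun j => by simp [hconst j i]
    rw [hvi, dotProduct_smul, smul_eq_mul] at hrv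
    exact (mul_eq_zero.1 hrv).resolve_right hr
  exact sub_eq_zero.1 hv0

end Matrix

theorem stationary_distribution_via_generalized_fundamental_general
    {S : ℕ} (P : Matrix (Fin S) (Fin S) ℝ)
    (hst : IsStochastic P) (hprim : _root_.IsPrimitive P)
    (π : Fin S → ℝ) (e : Fin S → ℝ) (he : e = fun _ => 1)
    (hπP : π ᵥ* P = π) (hπe : π ⬝ᵥ e = 1)
    (r : Fin S → ℝ) (hre : r ⬝ᵥ e ≠ 0) :
    π = r ᵥ* (1 - P + vecMulVec e r)⁻¹ := by
  obtain ⟨k, hk⟩ := hprim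
  rw [show e = 1 from he] at hπe hre ⊢
  set A := 1 - P + vecMulVec 1 r
  have hπA : π ᵥ* A = r := vecMul_one_sub_add_vecMulVec hπP hπe r
  have hA : IsUnit A.det := (isUnit_iff_isUnit_det A).1 <|
    isUnit_one_sub_add_vecMulVec hk
      (one_vecMul_of_mem_rowStochastic (mem_rowStochastic_iff_sum.2 hst)) hπA hre
  calc π = (π ᵥ* A) ᵥ* A⁻¹ := by rw [vecMul_vecMul, mul_nonsing_inv A hA, vecMul_one]
    _ = r ᵥ* A⁻¹ := by rw [hπA]

/-- For a primitive stochastic matrix `P` with stationary distribution `π`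
and a row vector `r` with `r·e ≠ 0`, we have `π = r (I − P + e·r)⁻¹`. -/
theorem stationary_distribution_via_generalized_fundamental
    {S : ℕ} (hS : 0 < S) (P : Matrix (Fin S) (Fin S) ℝ)
    (hst : IsStochastic P) (hprim : _root_.IsPrimitive P)
    (π : Fin S → ℝ) (e : Fin S → ℝ) (he : e = fun _ => 1)
    (hπP : π ᵥ* P = π) (hπe : π ⬝ᵥ e = 1)
    (r : Fin S → ℝ) (hre : r ⬝ᵥ e ≠ 0) :
    π = r ᵥ* (1 - P + vecMulVec e r)⁻¹ :=
  stationary_distribution_via_generalized_fundamental_general P hst hprim π e he hπP hπe r hre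
end

section
/- Let P be an irreducible aperiodic finite stochastic matrix and r a row vector with 0 < r·e < 2. Then (I − P + e·r)^{-1} = Σ_{n=0}^∞ (P − e·r)^n, and the series converges. -/
open Matrix

/-!
Write `Q = P - e r` and `β = 1 - r e`. Then `Q e = β e`, so `A = Q - β` annihilates the
constant vectors; as `P = Q + e r` and `A (e r) = 0`, this gives `A Qⁿ = A Pⁿ`, i.e.
`Qⁿ⁺¹ = β Qⁿ + A Pⁿ`. Some power of the primitive stochastic matrix `P` has positive entries,
so by Doeblin's argument `Pⁿ` contracts the oscillation `max x - min x` geometrically, and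
`‖A Pⁿ‖` is summable. Since `|β| < 1`, the recurrence makes `‖Qⁿ‖` summable, and the Neumann
series of `Q` inverts `1 - Q`.
-/

open Finset

theorem Commute.mul_add_pow_of_mul_eq_zero {R : Type*} [Semiring R] {a x y : R}
    (hax : Commute a x) (hay : a * y = 0) (n : ℕ) : a * (x + y) ^ n = a * x ^ n := by
  induction n with
  | zero => simp
  | succ n ih =>
    calc a * (x + y) ^ (n + 1) = a * x ^ n * x + x ^ n * (a * y) := by
          rw [pow_succ, ← mul_assoc, ih, mul_add, ← mul_assoc (x ^ n), ← (hax.pow_right n).eq]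
      _ = a * x ^ (n + 1) := by rw [hay, mul_zero, add_zero, pow_succ, mul_assoc]

theorem summable_of_succ_le_mul_add {u ε : ℕ → ℝ} {q : ℝ} (hu : ∀ n, 0 ≤ u n) (hq : q < 1)
    (hε : Summable ε) (hε₀ : ∀ n, 0 ≤ ε n) (h : ∀ n, u (n + 1) ≤ q * u n + ε n) :
    Summable u := by
  refine summable_of_sum_range_le hu (c := (u 0 + ∑' n, ε n) / (1 - q)) fun N => ?_
  have hmono : ∑ n ∈ range N, u n ≤ ∑ n ∈ range (N + 1), u n :=
    sum_le_sum_of_subset_of_nonneg (range_subset_range.2 N.le_succ) fun n _ _ => hu n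
  have hstep : ∑ n ∈ range (N + 1), u n ≤ u 0 + q * ∑ n ∈ range N, u n + ∑' n, ε n := by
    rw [sum_range_succ']
    calc ∑ n ∈ range N, u (n + 1) + u 0 ≤ ∑ n ∈ range N, (q * u n + ε n) + u 0 := by
          gcongr with n; exact h n
      _ ≤ u 0 + q * ∑ n ∈ range N, u n + ∑' n, ε n := by
          rw [sum_add_distrib, ← mul_sum]
          linarith [hε.sum_le_tsum (range N) fun n _ => hε₀ n]
  rw [le_div_iff₀ (by linarith)]
  linarith

theorem summable_pow_div {c : ℝ} (hc₀ : 0 ≤ c) (hc₁ : c < 1) {k : ℕ} (hk : 0 < k) :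
    Summable fun n : ℕ => c ^ (n / k) := by
  have : NeZero k := ⟨hk.ne'⟩
  rw [← (Nat.divModEquiv k).symm.summable_iff]
  have hcomp : (fun n : ℕ => c ^ (n / k)) ∘ (Nat.divModEquiv k).symm = fun p => c ^ p.1 * 1 := by
    ext ⟨q, j⟩
    simp only [Function.comp_apply, Nat.divModEquiv, Equiv.coe_fn_symm_mk, mul_one]
    rw [Nat.add_comm, Nat.add_mul_div_right _ _ hk, Nat.div_eq_of_lt j.isLt, zero_add]
  rw [hcomp]
  exact (summable_geometric_of_lt_one hc₀ hc₁).mul_of_nonneg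
    (Summable.of_finite (f := fun _ : Fin k => (1 : ℝ))) (fun _ => pow_nonneg hc₀ _)
    fun _ => zero_le_one

theorem mul_apply_pos_of_mem_rowStochastic {ι : Type*} [Fintype ι] [DecidableEq ι]
    {A B : Matrix ι ι ℝ} (hA : A ∈ rowStochastic ℝ ι) (hB : ∀ i j, 0 < B i j) (i j : ι) :
    0 < (A * B) i j := by
  obtain ⟨s, -, hs⟩ := (sum_pos_iff_of_nonneg fun s _ => nonneg_of_mem_rowStochastic hA).1
    ((sum_row_of_mem_rowStochastic hA i).symm ▸ zero_lt_one)
  exact sum_pos' (fun s _ => mul_nonneg (nonneg_of_mem_rowStochastic hA) (hB s j).le)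
    ⟨s, mem_univ s, mul_pos hs (hB s j)⟩

section Oscillation

variable {ι : Type*} [Fintype ι] [Nonempty ι]

noncomputable def osc (x : ι → ℝ) : ℝ :=
  univ.sup' univ_nonempty x - univ.inf' univ_nonempty x

theorem sub_le_osc (x : ι → ℝ) (i j : ι) : x i - x j ≤ osc x :=
  sub_le_sub (le_sup' x (mem_univ i)) (inf'_le x (mem_univ j))

theorem osc_le_iff {x : ι → ℝ} {b : ℝ} : osc x ≤ b ↔ ∀ i j, x i - x j ≤ b := by
  refine ⟨fun h i j => (sub_le_osc x i j).trans h, fun h => ?_⟩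
  obtain ⟨i, -, hi⟩ := exists_mem_eq_sup' univ_nonempty x
  obtain ⟨j, -, hj⟩ := exists_mem_eq_inf' univ_nonempty x
  rw [osc, hi, hj]
  exact h i j

theorem osc_nonneg (x : ι → ℝ) : 0 ≤ osc x := by
  simpa using sub_le_osc x (Classical.arbitrary ι) (Classical.arbitrary ι)

theorem osc_le_two_mul_norm (x : ι → ℝ) : osc x ≤ 2 * ‖x‖ :=
  osc_le_iff.2 fun i j => by
    have hi := (abs_le.1 ((Real.norm_eq_abs _).symm.trans_le (norm_le_pi_norm x i))).2
    have hj := (abs_le.1 ((Real.norm_eq_abs _).symm.trans_le (norm_le_pi_norm x j))).1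
    linarith

theorem norm_sub_smul_one_le_osc (x : ι → ℝ) (i : ι) : ‖x - x i • 1‖ ≤ osc x :=
  (pi_norm_le_iff_of_nonneg (osc_nonneg x)).2 fun j => by
    rw [Pi.sub_apply, Pi.smul_apply, Pi.one_apply, smul_eq_mul, mul_one, Real.norm_eq_abs, abs_le]
    exact ⟨by linarith [sub_le_osc x i j], sub_le_osc x j i⟩

theorem osc_mulVec_le {A : Matrix ι ι ℝ} {d : ℝ} (hrow : ∀ i, ∑ j, A i j = 1)
    (hd : ∀ i j, d ≤ A i j) (x : ι → ℝ) :
    osc (A *ᵥ x) ≤ (1 - Fintype.card ι * d) * osc x := by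
  have hsplit : ∀ i, (A *ᵥ x) i = d * ∑ j, x j + ∑ j, (A i j - d) * x j := fun i => by
    simp only [mulVec, dotProduct, sub_mul, sum_sub_distrib, mul_sum]
    ring
  have hweight : ∀ i, ∑ j, (A i j - d) = 1 - Fintype.card ι * d := fun i => by
    simp [sum_sub_distrib, hrow]
  refine osc_le_iff.2 fun i i' => ?_
  calc (A *ᵥ x) i - (A *ᵥ x) i' = ∑ j, (A i j - d) * x j - ∑ j, (A i' j - d) * x j := by
        rw [hsplit, hsplit]; ring
    _ ≤ ∑ j, (A i j - d) * univ.sup' univ_nonempty x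
        - ∑ j, (A i' j - d) * univ.inf' univ_nonempty x := by
        gcongr with j _ j _
        · exact sub_nonneg.2 (hd i j)
        · exact le_sup' x (mem_univ j)
        · exact sub_nonneg.2 (hd i' j)
        · exact inf'_le x (mem_univ j)
    _ = (1 - Fintype.card ι * d) * osc x := by
        rw [← sum_mul, ← sum_mul, hweight, hweight, osc, mul_sub]

theorem exists_osc_mulVec_le_of_pos {A : Matrix ι ι ℝ} (hrow : ∀ i, ∑ j, A i j = 1)
    (hpos : ∀ i j, 0 < A i j) : ∃ c, 0 ≤ c ∧ c < 1 ∧ ∀ x, osc (A *ᵥ x) ≤ c * osc x := by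
  obtain ⟨⟨i₀, j₀⟩, hmin⟩ := Finite.exists_min fun p : ι × ι => A p.1 p.2
  refine ⟨1 - Fintype.card ι * A i₀ j₀, ?_, ?_, osc_mulVec_le hrow fun i j => hmin (i, j)⟩
  · have hrow₀ := sum_le_sum fun j (_ : j ∈ univ) => hmin (i₀, j)
    simp only [sum_const, card_univ, nsmul_eq_mul, hrow] at hrow₀
    linarith
  · have hmin₀ := hpos i₀ j₀
    have hcard : (0 : ℝ) < Fintype.card ι := Nat.cast_pos.2 Fintype.card_pos
    nlinarith

variable [DecidableEq ι]

theorem osc_pow_mulVec_le {A : Matrix ι ι ℝ} {c : ℝ} (hc : 0 ≤ c)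
    (hA : ∀ x, osc (A *ᵥ x) ≤ c * osc x) (n : ℕ) (x : ι → ℝ) :
    osc (A ^ n *ᵥ x) ≤ c ^ n * osc x := by
  induction n generalizing x with
  | zero => simp
  | succ n ih =>
    rw [pow_succ, ← mulVec_mulVec, pow_succ, mul_assoc]
    exact (ih _).trans (mul_le_mul_of_nonneg_left (hA x) (pow_nonneg hc n))

theorem osc_pow_mulVec_le_pow_div {A : Matrix ι ι ℝ} {k : ℕ} {c : ℝ} (hc : 0 ≤ c)
    (hA : ∀ x, osc (A *ᵥ x) ≤ osc x) (hAk : ∀ x, osc (A ^ k *ᵥ x) ≤ c * osc x)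
    (n : ℕ) (x : ι → ℝ) : osc (A ^ n *ᵥ x) ≤ c ^ (n / k) * osc x :=
  calc osc (A ^ n *ᵥ x) = osc ((A ^ k) ^ (n / k) *ᵥ (A ^ (n % k) *ᵥ x)) := by
        rw [mulVec_mulVec, ← pow_mul, ← pow_add, Nat.div_add_mod]
    _ ≤ c ^ (n / k) * osc (A ^ (n % k) *ᵥ x) := osc_pow_mulVec_le hc hAk _ _
    _ ≤ c ^ (n / k) * osc x := by
        gcongr
        simpa using osc_pow_mulVec_le zero_le_one (by simpa using hA) (n % k) x

theorem exists_osc_pow_mulVec_le {P : Matrix ι ι ℝ} (hP : P ∈ rowStochastic ℝ ι) {k : ℕ}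
    (hk : ∀ i j, 0 < (P ^ k) i j) :
    ∃ c m, 0 ≤ c ∧ c < 1 ∧ 0 < m ∧ ∀ n x, osc (P ^ n *ᵥ x) ≤ c ^ (n / m) * osc x := by
  obtain ⟨c, hc₀, hc₁, hc⟩ := exists_osc_mulVec_le_of_pos
    (sum_row_of_mem_rowStochastic (pow_mem hP (k + 1)))
    (pow_succ' P k ▸ mul_apply_pos_of_mem_rowStochastic hP hk)
  refine ⟨c, k + 1, hc₀, hc₁, k.succ_pos, osc_pow_mulVec_le_pow_div hc₀ (fun x => ?_) hc⟩
  simpa using osc_mulVec_le (sum_row_of_mem_rowStochastic hP)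
    (fun _ _ => nonneg_of_mem_rowStochastic hP) x

end Oscillation

section LinftyOpNorm

attribute [local instance] Matrix.linftyOpNormedAddCommGroup Matrix.linftyOpNormedRing
  Matrix.linftyOpNormedSpace

variable {ι : Type*} [Fintype ι] [Nonempty ι]

theorem norm_mul_le_of_mulVec_one_eq_zero {A B : Matrix ι ι ℝ} (hA : A *ᵥ 1 = 0) {b : ℝ}
    (hb : 0 ≤ b) (hB : ∀ x, osc (B *ᵥ x) ≤ b * ‖x‖) : ‖A * B‖ ≤ ‖A‖ * b := by
  rw [← coe_nnnorm, linfty_opNNNorm_eq_opNNNorm, coe_nnnorm]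
  refine ContinuousLinearMap.opNorm_le_bound _ (by positivity) fun x => ?_
  obtain ⟨i⟩ := ‹Nonempty ι›
  set y := B *ᵥ x
  have hy : (A * B) *ᵥ x = A *ᵥ (y - y i • 1) := by
    rw [mulVec_sub, mulVec_smul, hA, smul_zero, sub_zero, mulVec_mulVec]
  calc ‖(A * B) *ᵥ x‖ = ‖A *ᵥ (y - y i • 1)‖ := by rw [hy]
    _ ≤ ‖A‖ * osc y :=
        (linfty_opNorm_mulVec _ _).trans (by gcongr; exact norm_sub_smul_one_le_osc y i)
    _ ≤ ‖A‖ * b * ‖x‖ := by rw [mul_assoc]; gcongr; exact hB x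

theorem summable_pow_sub_vecMulVec_one [DecidableEq ι] {P : Matrix ι ι ℝ}
    (hP : P ∈ rowStochastic ℝ ι) {k : ℕ} (hk : ∀ i j, 0 < (P ^ k) i j) {r : ι → ℝ}
    (hr₀ : 0 < r ⬝ᵥ 1) (hr₂ : r ⬝ᵥ 1 < 2) :
    Summable fun n => (P - vecMulVec 1 r) ^ n := by
  obtain ⟨c, m, hc₀, hc₁, hm, hdecay⟩ := exists_osc_pow_mulVec_le hP hk
  set v := vecMulVec 1 r
  set Q := P - v
  set β := 1 - r ⬝ᵥ 1
  set A := Q - β • 1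
  have hA : A *ᵥ 1 = 0 := by
    rw [sub_mulVec, sub_mulVec, one_vecMul_of_mem_rowStochastic hP, vecMulVec_mulVec,
      smul_mulVec, one_mulVec, op_smul_eq_smul]
    module
  have hrec : ∀ n, Q ^ (n + 1) = β • Q ^ n + A * P ^ n := fun n => by
    have hcomm : Commute A Q := (Commute.refl Q).sub_left ((Commute.one_left Q).smul_left β)
    have hAv : A * v = 0 := by rw [mul_vecMulVec, hA, zero_vecMulVec]
    calc Q ^ (n + 1) = (β • 1 + A) * Q ^ n := by rw [pow_succ', add_sub_cancel]
      _ = β • Q ^ n + A * (Q + v) ^ n := by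
          rw [add_mul, smul_mul_assoc, one_mul, hcomm.mul_add_pow_of_mul_eq_zero hAv]
      _ = β • Q ^ n + A * P ^ n := by rw [sub_add_cancel]
  refine Summable.of_norm <| summable_of_succ_le_mul_add (q := |β|) (fun n => norm_nonneg _)
    (abs_lt.2 ⟨by linarith, by linarith⟩) ((summable_pow_div hc₀ hc₁ hm).mul_left (‖A‖ * 2))
    (fun n => by positivity) fun n => ?_
  calc ‖Q ^ (n + 1)‖ ≤ ‖β • Q ^ n‖ + ‖A * P ^ n‖ := hrec n ▸ norm_add_le _ _
    _ ≤ |β| * ‖Q ^ n‖ + ‖A‖ * 2 * c ^ (n / m) := by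
        rw [norm_smul, Real.norm_eq_abs, mul_assoc ‖A‖]
        gcongr
        refine norm_mul_le_of_mulVec_one_eq_zero hA (by positivity) fun x => ?_
        calc osc (P ^ n *ᵥ x) ≤ c ^ (n / m) * osc x := hdecay n x
          _ ≤ 2 * c ^ (n / m) * ‖x‖ := by
              rw [mul_comm 2, mul_assoc]; gcongr; exact osc_le_two_mul_norm x

end LinftyOpNorm

/-- If `0 < r·e < 2`, then the Neumann series `Σ (P − e·r)ⁿ` converges and
equals `(I − P + e·r)⁻¹`. -/
theorem generalized_fundamental_neumann_series
    {S : ℕ} (hS : 0 < S) (P : Matrix (Fin S) (Fin S) ℝ)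
    (hst : IsStochastic P) (hprim : _root_.IsPrimitive P)
    (r : Fin S → ℝ) (e : Fin S → ℝ) (he : e = fun _ => 1)
    (hre : 0 < r ⬝ᵥ e) (hre2 : r ⬝ᵥ e < 2) :
    Summable (fun n : ℕ => (P - vecMulVec e r) ^ n) ∧
    (1 - P + vecMulVec e r)⁻¹ = ∑' n : ℕ, (P - vecMulVec e r) ^ n := by
  have : Nonempty (Fin S) := Fin.pos_iff_nonempty.1 hS
  obtain ⟨k, hk⟩ := hprim
  subst he
  have hsum : Summable fun n => (P - vecMulVec 1 r) ^ n :=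
    summable_pow_sub_vecMulVec_one (mem_rowStochastic_iff_sum.2 hst) hk hre hre2
  refine ⟨hsum, inv_eq_right_inv ?_⟩
  rw [sub_add]
  exact hsum.one_sub_mul_tsum_pow
end

section
/- Let P be an irreducible aperiodic finite stochastic matrix with stationary distribution π, and r a row vector with r·e = 1 and ρ(P − e·r) < 1. Then (I − P + e·r)^{-1} = Σ_{n=0}^∞ (P^n − e·r·P^n) + e·π. -/
open Matrix

/-!
Put `Q = e·r`. Since `P e = e` and `r e = 1`, `Q` is an idempotent with `P Q = Q`, and
induction gives `(I − Q)(P − Q)ⁿ = Pⁿ − Q Pⁿ`. By Gelfand's formula `ρ(P − Q) < 1` makes the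
Neumann series `Σ (P − Q)ⁿ` converge to `(I − P + Q)⁻¹`, so the series in the theorem sums to
`(I − Q)(I − P + Q)⁻¹`. Finally `e·π (I − P + Q) = Q` because `π P = π` and `π e = 1`,
whence `Q (I − P + Q)⁻¹ = e·π`.
-/

open Filter

theorem summable_pow_of_spectralRadius_lt_one {A : Type*} [NormedRing A] [NormedAlgebra ℂ A]
    [CompleteSpace A] {a : A} (h : spectralRadius ℂ a < 1) : Summable (a ^ ·) := by
  obtain ⟨c, hρc, hc1⟩ := ENNReal.lt_iff_exists_nnreal_btwn.mp h
  have hbound : ∀ᶠ n : ℕ in atTop, ‖a ^ n‖ ≤ (c : ℝ) ^ n := by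
    filter_upwards [(spectrum.pow_nnnorm_pow_one_div_tendsto_nhds_spectralRadius a)
      |>.eventually_lt_const hρc, eventually_gt_atTop 0] with n hn hn0
    rw [one_div, ENNReal.rpow_inv_lt_iff (by positivity), ENNReal.rpow_natCast] at hn
    exact_mod_cast hn.le
  exact .of_norm_bounded_eventually_nat
    (summable_geometric_of_lt_one c.2 (by exact_mod_cast hc1)) hbound

theorem Matrix.summable_of_summable_map_ofReal {X n : Type*} [Fintype n] {f : X → Matrix n n ℝ}
    (h : Summable fun k => (f k).map ((↑) : ℝ → ℂ)) : Summable f := by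
  simpa [Function.comp_def] using
    h.map Complex.reAddGroupHom.mapMatrix (continuous_id.matrix_map Complex.continuous_re)

open scoped Matrix.Norms.L2Operator in
theorem Matrix.summable_pow_of_spectralRadius_map_ofReal_lt_one {n : Type*} [Fintype n]
    [DecidableEq n] {A : Matrix n n ℝ} (h : spectralRadius ℂ (A.map ((↑) : ℝ → ℂ)) < 1) :
    Summable (A ^ ·) := by
  refine summable_of_summable_map_ofReal ?_
  have hpow (k : ℕ) : (A ^ k).map ((↑) : ℝ → ℂ) = A.map (↑) ^ k :=
    map_pow Complex.ofRealHom.mapMatrix A k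
  simpa only [hpow] using _root_.summable_pow_of_spectralRadius_lt_one h

theorem pow_mul_eq_self_of_mul_eq_self {R : Type*} [Monoid R] {P Q : R} (h : P * Q = Q)
    (n : ℕ) : P ^ n * Q = Q := by
  rw [← mul_left_iterate_apply]
  exact Function.IsFixedPt.iterate h n

theorem one_sub_mul_sub_pow {R : Type*} [Ring R] {P Q : R} (hQ : Q * Q = Q) (hPQ : P * Q = Q)
    (n : ℕ) : (1 - Q) * (P - Q) ^ n = P ^ n - Q * P ^ n := by
  induction n with
  | zero => simp
  | succ n ih =>
    have hPnQ := pow_mul_eq_self_of_mul_eq_self hPQ n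
    rw [pow_succ, ← mul_assoc, ih, sub_mul, mul_sub, mul_sub, hPnQ, mul_assoc Q (P ^ n) Q, hPnQ,
      hQ, mul_assoc Q (P ^ n) P, ← pow_succ]
    abel

theorem IsStochastic.mulVec_one_s13 {S : ℕ} {P : Matrix (Fin S) (Fin S) ℝ} (hP : IsStochastic P) :
    P *ᵥ (fun _ => 1) = fun _ => 1 := by
  ext i
  simp [mulVec, dotProduct, hP.2 i]

theorem generalized_fundamental_series_representation_general
    {S : ℕ} (P : Matrix (Fin S) (Fin S) ℝ)
    (hst : IsStochastic P)
    (π : Fin S → ℝ) (e : Fin S → ℝ) (he : e = fun _ => 1)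
    (hπP : π ᵥ* P = π) (hπe : π ⬝ᵥ e = 1)
    (r : Fin S → ℝ) (hre : r ⬝ᵥ e = 1)
    (hρ : spectralRadius ℂ ((P - vecMulVec e r).map (fun t => (t : ℂ))) < 1) :
    Summable (fun n : ℕ => P ^ n - vecMulVec e r * P ^ n) ∧
    (1 - P + vecMulVec e r)⁻¹ =
      (∑' n : ℕ, (P ^ n - vecMulVec e r * P ^ n)) + vecMulVec e π := by
  set Q := vecMulVec e r
  have hPe : P *ᵥ e = e := he ▸ hst.mulVec_one_s13
  have hQ : Q * Q = Q := by rw [vecMulVec_mul_vecMulVec, hre, one_smul]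
  have hPQ : P * Q = Q := by rw [mul_vecMulVec, hPe]
  have hterm : (fun n : ℕ => P ^ n - Q * P ^ n) = fun n => (1 - Q) * (P - Q) ^ n :=
    funext fun n => (one_sub_mul_sub_pow hQ hPQ n).symm
  have hsum := summable_pow_of_spectralRadius_map_ofReal_lt_one hρ
  have hneumann : (1 - P + Q) * ∑' n : ℕ, (P - Q) ^ n = 1 := by
    rw [show 1 - P + Q = 1 - (P - Q) by abel]
    exact hsum.one_sub_mul_tsum_pow
  have hπQ : vecMulVec e π * (1 - P + Q) = Q := by
    rw [mul_add, mul_sub, mul_one, vecMulVec_mul, hπP, vecMulVec_mul_vecMulVec, hπe, one_smul,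
      sub_self, zero_add]
  have hQ_tsum : Q * ∑' n : ℕ, (P - Q) ^ n = vecMulVec e π := by
    nth_rw 1 [← hπQ]
    rw [mul_assoc, hneumann, mul_one]
  refine ⟨hterm ▸ hsum.mul_left _, ?_⟩
  rw [hterm, hsum.tsum_mul_left, sub_mul, one_mul, hQ_tsum, inv_eq_right_inv hneumann]
  abel

/-- If `r·e = 1` and `ρ(P − e·r) < 1`, then
`(I − P + e·r)⁻¹ = Σₙ (Pⁿ − e·r·Pⁿ) + e·π`. -/
theorem generalized_fundamental_series_representation
    {S : ℕ} (hS : 0 < S) (P : Matrix (Fin S) (Fin S) ℝ)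
    (hst : IsStochastic P) (hprim : _root_.IsPrimitive P)
    (π : Fin S → ℝ) (e : Fin S → ℝ) (he : e = fun _ => 1)
    (hπP : π ᵥ* P = π) (hπe : π ⬝ᵥ e = 1)
    (r : Fin S → ℝ) (hre : r ⬝ᵥ e = 1)
    (hρ : spectralRadius ℂ ((P - vecMulVec e r).map (fun t => (t : ℂ))) < 1) :
    Summable (fun n : ℕ => P ^ n - vecMulVec e r * P ^ n) ∧
    (1 - P + vecMulVec e r)⁻¹ =
      (∑' n : ℕ, (P ^ n - vecMulVec e r * P ^ n)) + vecMulVec e π :=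
  generalized_fundamental_series_representation_general P hst π e he hπP hπe r hre hρ
end

section
/- Let B be the generator of an ergodic finite continuous-time Markov process with stationary distribution π (π B = 0, π e = 1), and let r be a row vector with r·e ≠ 0. Then π = r (B + e·r)^{-1}. -/
open Matrix

/-!
Since `π B = 0` and `π e = 1`, we get `π (B + e r) = r`, so it suffices that `B + e r` is
invertible. If `(B + e r) v = 0`, pairing with `π` gives `r v = 0`, hence `B v = 0`. Then `v` is
fixed by the positive stochastic matrix `(I + B/γ)^k`, and the maximum principle forces `v` to be
constant, `v = c e`; finally `0 = r v = c (r e)` gives `c = 0`.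
-/

variable {ι : Type*} [Fintype ι]

/-- Maximum principle: at a maximum `m` of `v`, `v m = ∑ i, M m i * v i` is an average with
positive weights, so every `v i` equals `v m`. -/
theorem Matrix.exists_eq_smul_one_of_mulVec_eq_self_of_pos {M : Matrix ι ι ℝ}
    (hpos : ∀ i j, 0 < M i j) (hM1 : M *ᵥ 1 = 1) {v : ι → ℝ} (hv : M *ᵥ v = v) :
    ∃ c : ℝ, v = c • 1 := by
  cases isEmpty_or_nonempty ι
  · exact ⟨0, Subsingleton.elim _ _⟩
  obtain ⟨m, hm⟩ := Finite.exists_max v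
  refine ⟨v m, funext fun i => ?_⟩
  have hrow : ∑ i, M m i = 1 := by simpa [mulVec, dotProduct] using congrFun hM1 m
  have hsum : ∑ i, M m i * (v m - v i) = 0 := by
    have hfix : ∑ i, M m i * v i = v m := congrFun hv m
    simp only [mul_sub, Finset.sum_sub_distrib, ← Finset.sum_mul, hrow, hfix]
    ring
  have hterm := (Finset.sum_eq_zero_iff_of_nonneg fun i _ =>
    mul_nonneg (hpos m i).le (sub_nonneg.2 (hm i))).1 hsum i (Finset.mem_univ i)
  have := (mul_eq_zero.1 hterm).resolve_left (hpos m i).ne'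
  simp only [Pi.smul_apply, Pi.one_apply, smul_eq_mul, mul_one]
  linarith

theorem Matrix.vecMul_add_vecMulVec_of_vecMul_eq_zero {R : Type*} [CommSemiring R]
    {B : Matrix ι ι R} {π e : ι → R} (hπB : π ᵥ* B = 0) (hπe : π ⬝ᵥ e = 1) (r : ι → R) :
    π ᵥ* (B + vecMulVec e r) = r := by
  rw [vecMul_add, hπB, zero_add, vecMul_vecMulVec, hπe, one_smul]

variable [DecidableEq ι]

theorem Matrix.pow_mulVec_eq_self_s17 {R : Type*} [CommSemiring R] {A : Matrix ι ι R} {v : ι → R}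
    (hv : A *ᵥ v = v) (n : ℕ) : A ^ n *ᵥ v = v := by
  induction n with
  | zero => rw [pow_zero, one_mulVec]
  | succ n ih => rw [pow_succ, ← mulVec_mulVec, hv, ih]

theorem Matrix.one_add_smul_mulVec_of_mulVec_eq_zero {R : Type*} [CommSemiring R]
    {B : Matrix ι ι R} {v : ι → R} (hv : B *ᵥ v = 0) (c : R) : (1 + c • B) *ᵥ v = v := by
  rw [add_mulVec, one_mulVec, smul_mulVec, hv, smul_zero, add_zero]

theorem Matrix.exists_eq_smul_one_of_mulVec_eq_zero_of_pow_pos {B : Matrix ι ι ℝ}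
    (hB1 : B *ᵥ 1 = 0) {γ : ℝ} {k : ℕ} (hk : ∀ i j, 0 < ((1 + γ⁻¹ • B) ^ k) i j)
    {v : ι → ℝ} (hv : B *ᵥ v = 0) :
    ∃ c : ℝ, v = c • 1 :=
  exists_eq_smul_one_of_mulVec_eq_self_of_pos hk
    (pow_mulVec_eq_self_s17 (one_add_smul_mulVec_of_mulVec_eq_zero hB1 _) k)
    (pow_mulVec_eq_self_s17 (one_add_smul_mulVec_of_mulVec_eq_zero hv _) k)

theorem Matrix.isUnit_det_add_vecMulVec {K : Type*} [Field K] {B : Matrix ι ι K} {e r π : ι → K}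
    (hker : ∀ v, B *ᵥ v = 0 → ∃ c : K, v = c • e) (hπB : π ᵥ* B = 0) (hπe : π ⬝ᵥ e ≠ 0)
    (hre : r ⬝ᵥ e ≠ 0) : IsUnit (B + vecMulVec e r).det := by
  refine isUnit_iff_ne_zero.2 fun hdet => ?_
  obtain ⟨v, hv0, hMv⟩ := exists_mulVec_eq_zero_iff.2 hdet
  have hsplit : B *ᵥ v + (r ⬝ᵥ v) • e = 0 := by
    rwa [add_mulVec, vecMulVec_mulVec, op_smul_eq_smul] at hMv
  have hrv : r ⬝ᵥ v = 0 := by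
    have := congrArg (π ⬝ᵥ ·) hsplit
    simp only [dotProduct_add, dotProduct_mulVec, hπB, zero_dotProduct, dotProduct_smul,
      smul_eq_mul, zero_add, dotProduct_zero] at this
    exact (mul_eq_zero.1 this).resolve_right hπe
  rw [hrv, zero_smul, add_zero] at hsplit
  obtain ⟨c, rfl⟩ := hker v hsplit
  rw [dotProduct_smul, smul_eq_mul, mul_eq_zero] at hrv
  exact hv0 (by rw [hrv.resolve_right hre, zero_smul])

theorem ctmc_stationary_distribution_formula_general
    {S : ℕ} (B : Matrix (Fin S) (Fin S) ℝ)
    (e : Fin S → ℝ) (he : e = fun _ => 1)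
    (hBe : B *ᵥ e = 0)
    (γ : ℝ)
    (hprim : ∃ k : ℕ, ∀ i j, 0 < ((1 + γ⁻¹ • B) ^ k) i j)
    (π : Fin S → ℝ) (hπB : π ᵥ* B = 0) (hπe : π ⬝ᵥ e = 1)
    (r : Fin S → ℝ) (hre : r ⬝ᵥ e ≠ 0) :
    π = r ᵥ* (B + vecMulVec e r)⁻¹ := by
  obtain rfl : e = 1 := he
  obtain ⟨k, hk⟩ := hprim
  have hdet : IsUnit (B + vecMulVec 1 r).det :=
    isUnit_det_add_vecMulVec (fun _ => exists_eq_smul_one_of_mulVec_eq_zero_of_pow_pos hBe hk)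
      hπB (hπe ▸ one_ne_zero) hre
  calc π = π ᵥ* (B + vecMulVec 1 r) ᵥ* (B + vecMulVec 1 r)⁻¹ := by
        rw [vecMul_vecMul, mul_nonsing_inv _ hdet, vecMul_one]
    _ = r ᵥ* (B + vecMulVec 1 r)⁻¹ := by
        rw [vecMul_add_vecMulVec_of_vecMul_eq_zero hπB hπe]

/-- For the generator `B` of an ergodic finite continuous-time Markov process
with stationary distribution `π` and a row vector `r` with `r·e ≠ 0`, we have
`π = r (B + e·r)⁻¹`. -/
theorem ctmc_stationary_distribution_formula
    {S : ℕ} (hS : 0 < S) (B : Matrix (Fin S) (Fin S) ℝ)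
    (hoff : ∀ i j, i ≠ j → 0 ≤ B i j)
    (e : Fin S → ℝ) (he : e = fun _ => 1)
    (hBe : B *ᵥ e = 0)
    (γ : ℝ) (hγpos : 0 < γ) (hγ : ∀ s, |B s s| ≤ γ)
    (hprim : ∃ k : ℕ, ∀ i j, 0 < ((1 + γ⁻¹ • B) ^ k) i j)
    (π : Fin S → ℝ) (hπB : π ᵥ* B = 0) (hπe : π ⬝ᵥ e = 1)
    (r : Fin S → ℝ) (hre : r ⬝ᵥ e ≠ 0) :
    π = r ᵥ* (B + vecMulVec e r)⁻¹ :=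
  ctmc_stationary_distribution_formula_general B e he hBe γ hprim π hπB hπe r hre
end
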